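/- arXiv:2309.00213 — 9 statements merged into one kernel-verified Lean document; each statement's English description precedes it below -/
import Mathlib

section
/- Let D = (X, B) be a covering design and let w be a normalised weighting of X such that L(D, w) < 1. Then for each point x in X, the replication number r_x is at least 2 and w(x) <= (r_x * L(D, w) - 1) / (r_x - 1). -/
/-!
Summing the weights of the `r_x` blocks through `x` counts `w x` exactly `r_x` times and, since
every other point shares a block with `x`, every other point at least once. Hence
`r_x w(x) + (1 - w(x)) ≤ r_x L`, which rearranges to the bound and rules out `r_x = 1`
(it would force `L ≥ 1`); `r_x = 0` is impossible because `x` shares a block with some other point.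
-/

open Finset

theorem Finset.sum_biUnion_le_sum_sum {ι α β : Type*} [DecidableEq α] [AddCommMonoid β]
    [PartialOrder β] [IsOrderedAddMonoid β] {s : Finset ι} {t : ι → Finset α} {f : α → β}
    (hf : ∀ a ∈ s.biUnion t, 0 ≤ f a) :
    ∑ a ∈ s.biUnion t, f a ≤ ∑ i ∈ s, ∑ a ∈ t i, f a := by
  have h : s.biUnion t = (s.sigma fun i => t i).image Sigma.snd := by
    ext a; simp
  rw [h] at hf ⊢
  exact (sum_image_le_of_nonneg hf).trans_eq (sum_sigma _ _ _)

namespace CoveringDesign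

variable {α ι : Type*} {X : Finset α} {blk : ι → Finset α}

theorem exists_mem_blk (hX : 2 ≤ X.card)
    (hcov : ∀ x ∈ X, ∀ y ∈ X, x ≠ y → ∃ i, x ∈ blk i ∧ y ∈ blk i) {x : α} (hx : x ∈ X) :
    ∃ i, x ∈ blk i := by
  obtain ⟨y, hy, hyx⟩ := exists_mem_ne hX x
  obtain ⟨i, hxi, -⟩ := hcov x hx y hy hyx.symm
  exact ⟨i, hxi⟩

variable [DecidableEq α] [Fintype ι]

theorem erase_subset_biUnion_erase
    (hcov : ∀ x ∈ X, ∀ y ∈ X, x ≠ y → ∃ i, x ∈ blk i ∧ y ∈ blk i) {x : α} (hx : x ∈ X) :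
    X.erase x ⊆ (univ.filter fun i => x ∈ blk i).biUnion fun i => (blk i).erase x := by
  intro y hy
  obtain ⟨hyx, hyX⟩ := mem_erase.mp hy
  obtain ⟨i, hxi, hyi⟩ := hcov x hx y hyX hyx.symm
  exact mem_biUnion.mpr ⟨i, mem_filter.mpr ⟨mem_univ i, hxi⟩, mem_erase.mpr ⟨hyx, hyi⟩⟩

theorem card_mul_add_sum_erase_le (hsub : ∀ i, blk i ⊆ X)
    (hcov : ∀ x ∈ X, ∀ y ∈ X, x ≠ y → ∃ i, x ∈ blk i ∧ y ∈ blk i)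
    {w : α → ℝ} (hw0 : ∀ x ∈ X, 0 ≤ w x) {x : α} (hx : x ∈ X) :
    ((univ.filter fun i => x ∈ blk i).card : ℝ) * w x + ∑ y ∈ X.erase x, w y ≤
      ∑ i ∈ univ.filter (fun i => x ∈ blk i), ∑ z ∈ blk i, w z := by
  set S := univ.filter fun i => x ∈ blk i
  have hsplit : ∀ i ∈ S, ∑ z ∈ blk i, w z = w x + ∑ z ∈ (blk i).erase x, w z := fun i hi =>
    (add_sum_erase _ _ (mem_filter.mp hi).2).symm
  have hnonneg : ∀ y ∈ S.biUnion fun i => (blk i).erase x, 0 ≤ w y := by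
    intro y hy
    obtain ⟨i, -, hyi⟩ := mem_biUnion.mp hy
    exact hw0 y (hsub i (mem_of_mem_erase hyi))
  rw [sum_congr rfl hsplit, sum_add_distrib, sum_const, nsmul_eq_mul]
  gcongr
  calc ∑ y ∈ X.erase x, w y ≤ ∑ y ∈ S.biUnion fun i => (blk i).erase x, w y :=
        sum_le_sum_of_subset_of_nonneg (erase_subset_biUnion_erase hcov hx) fun y hy _ =>
          hnonneg y hy
    _ ≤ _ := sum_biUnion_le_sum_sum hnonneg

end CoveringDesign

open CoveringDesign

/-- Let `D = (X, B)` be a covering design (with at least two points, so every point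
must lie in some block) and `w` a normalised weighting of `X` with `L(D, w) < 1`.
Then for each `x ∈ X` the replication number `r_x` is at least `2` and
`w(x) ≤ (r_x * L(D, w) - 1) / (r_x - 1)`. -/
theorem stmt3 {α : Type*} [DecidableEq α] {ι : Type*} [Fintype ι]
    (X : Finset α) (blk : ι → Finset α)
    (hX : 2 ≤ X.card)
    (hsub : ∀ i, blk i ⊆ X)
    (hcov : ∀ x ∈ X, ∀ y ∈ X, x ≠ y → ∃ i, x ∈ blk i ∧ y ∈ blk i)
    (w : α → ℝ) (hw0 : ∀ x ∈ X, 0 ≤ w x) (hw1 : ∑ x ∈ X, w x = 1)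
    (ℓ : ℝ) (hℓ : IsGreatest {r : ℝ | ∃ i, r = ∑ x ∈ blk i, w x} ℓ)
    (hℓ1 : ℓ < 1) :
    ∀ x ∈ X,
      2 ≤ (univ.filter fun i => x ∈ blk i).card ∧
      w x ≤ (((univ.filter fun i => x ∈ blk i).card : ℝ) * ℓ - 1) /
        (((univ.filter fun i => x ∈ blk i).card : ℝ) - 1) := by
  intro x hx
  set r := (univ.filter fun i => x ∈ blk i).card
  have hrest : ∑ y ∈ X.erase x, w y = 1 - w x := by
    rw [← hw1, ← add_sum_erase X w hx, add_sub_cancel_left]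
  have hkey : (r : ℝ) * w x + (1 - w x) ≤ r * ℓ := by
    rw [← hrest]
    exact (card_mul_add_sum_erase_le hsub hcov hw0 hx).trans <|
      (sum_le_card_nsmul _ _ _ fun i _ => hℓ.2 ⟨i, rfl⟩).trans_eq (nsmul_eq_mul _ _)
  have hr1 : 1 ≤ r := by
    obtain ⟨i, hi⟩ := exists_mem_blk hX hcov hx
    exact card_pos.mpr ⟨i, mem_filter.mpr ⟨mem_univ i, hi⟩⟩
  have hr2 : 2 ≤ r := by
    by_contra! h
    have hr : (r : ℝ) = 1 := by exact_mod_cast (by omega : r = 1)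
    rw [hr] at hkey
    linarith
  refine ⟨hr2, (le_div_iff₀ ?_).mpr ?_⟩
  · have : (2 : ℝ) ≤ r := by exact_mod_cast hr2
    linarith
  · linarith
end

section
/- Let D = (X, B) be a covering design and let w be a positive normalised weighting of X with L(D, w) < 1. If for a point x in X equality holds in w(x) = (r_x * L(D, w) - 1)/(r_x - 1), then every block containing x has weight exactly L(D, w) and every point y distinct from x lies in exactly one block containing x. -/
open Finset

/-- Equality case of the point-weight bound: if `w` is a positive normalised weighting
of a covering design `D = (X, B)` (with at least two points) with `L(D, w) < 1`, and
for some `x ∈ X` we have `w(x) = (r_x * L(D, w) - 1)/(r_x - 1)`, then every block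
containing `x` has weight exactly `L(D, w)` and every point `y ≠ x` of `X` lies in
exactly one block containing `x`. -/
theorem stmt4 {α : Type*} [DecidableEq α] {ι : Type*} [Fintype ι]
    (X : Finset α) (blk : ι → Finset α)
    (hX : 2 ≤ X.card)
    (hsub : ∀ i, blk i ⊆ X)
    (hcov : ∀ x ∈ X, ∀ y ∈ X, x ≠ y → ∃ i, x ∈ blk i ∧ y ∈ blk i)
    (w : α → ℝ) (hw0 : ∀ x ∈ X, 0 < w x) (hw1 : ∑ x ∈ X, w x = 1)
    (ℓ : ℝ) (hℓ : IsGreatest {r : ℝ | ∃ i, r = ∑ x ∈ blk i, w x} ℓ)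
    (hℓ1 : ℓ < 1)
    (x : α) (hx : x ∈ X)
    (heq : w x = (((univ.filter fun i => x ∈ blk i).card : ℝ) * ℓ - 1) /
      (((univ.filter fun i => x ∈ blk i).card : ℝ) - 1)) :
    (∀ i, x ∈ blk i → ∑ y ∈ blk i, w y = ℓ) ∧
    (∀ y ∈ X, y ≠ x → (univ.filter fun i => x ∈ blk i ∧ y ∈ blk i).card = 1) := by
  classical
  set F : Finset ι := univ.filter (fun i => x ∈ blk i) with hF
  obtain ⟨y0, hy0X, hy0⟩ := Finset.exists_mem_ne (by omega : 1 < X.card) x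
  obtain ⟨i0, hxi0, hyi0⟩ := hcov x hx y0 hy0X (fun h => hy0 h.symm)
  have hFne : F.Nonempty := ⟨i0, by simp [hF, hxi0]⟩
  have hub : ∀ i, ∑ z ∈ blk i, w z ≤ ℓ := fun i => hℓ.2 ⟨i, rfl⟩
  have hr1 : 1 ≤ F.card := Finset.card_pos.mpr hFne
  have hrne : F.card ≠ 1 := by
    intro h1
    obtain ⟨j, hj⟩ := Finset.card_eq_one.mp h1
    have hxj : x ∈ blk j := by
      have hjF : j ∈ F := by simp [hj]
      simpa [hF] using hjF
    have hXsub : X ⊆ blk j := by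
      intro z hz
      by_cases hzx : z = x
      · subst hzx; exact hxj
      · obtain ⟨i, hxi, hzi⟩ := hcov x hx z hz (fun h => hzx h.symm)
        have hiF : i ∈ F := by simp [hF, hxi]
        rw [hj, Finset.mem_singleton] at hiF
        subst hiF; exact hzi
    have hbX : blk j = X := Finset.Subset.antisymm (hsub j) hXsub
    have hj1 := hub j
    rw [hbX, hw1] at hj1
    linarith
  have hr2 : 2 ≤ F.card := by omega
  have hblkerase : ∀ i ∈ F, (X.erase x).filter (fun z => z ∈ blk i) = (blk i).erase x := by
    intro i hi
    ext z
    simp only [mem_filter, mem_erase]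
    constructor
    · rintro ⟨⟨hzx, _⟩, hzb⟩; exact ⟨hzx, hzb⟩
    · rintro ⟨hzx, hzb⟩; exact ⟨⟨hzx, hsub i hzb⟩, hzb⟩
  have hB : ∑ i ∈ F, ∑ z ∈ (blk i).erase x, w z
      = ∑ z ∈ X.erase x, ((F.filter (fun i => z ∈ blk i)).card : ℝ) * w z := by
    have hstep : ∀ i ∈ F, ∑ z ∈ (blk i).erase x, w z
        = ∑ z ∈ X.erase x, if z ∈ blk i then w z else 0 := by
      intro i hi
      rw [← Finset.sum_filter, hblkerase i hi]
    rw [Finset.sum_congr rfl hstep, Finset.sum_comm]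
    refine Finset.sum_congr rfl fun z _ => ?_
    rw [← Finset.sum_filter, Finset.sum_const, nsmul_eq_mul]
  have hsplit : ∀ i ∈ F, ∑ z ∈ blk i, w z = w x + ∑ z ∈ (blk i).erase x, w z := by
    intro i hi
    have hxi : x ∈ blk i := by simpa [hF] using hi
    rw [Finset.add_sum_erase _ _ hxi]
  have hA : ∑ i ∈ F, ∑ z ∈ blk i, w z
      = (F.card : ℝ) * w x + ∑ z ∈ X.erase x, ((F.filter (fun i => z ∈ blk i)).card : ℝ) * w z := by
    rw [Finset.sum_congr rfl hsplit, Finset.sum_add_distrib, Finset.sum_const, nsmul_eq_mul, hB]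
  have hm1 : ∀ z ∈ X.erase x, 1 ≤ (F.filter (fun i => z ∈ blk i)).card := by
    intro z hz
    obtain ⟨hzx, hzX⟩ := Finset.mem_erase.mp hz
    obtain ⟨i, hxi, hzi⟩ := hcov x hx z hzX (fun h => hzx h.symm)
    exact Finset.card_pos.mpr ⟨i, by simp [hF, hxi, hzi]⟩
  have hsumerase : ∑ z ∈ X.erase x, w z = 1 - w x := by
    have h := Finset.add_sum_erase X w hx
    rw [hw1] at h
    linarith
  have hlow : ∑ z ∈ X.erase x, w z ≤ ∑ z ∈ X.erase x, ((F.filter (fun i => z ∈ blk i)).card : ℝ) * w z := by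
    refine Finset.sum_le_sum fun z hz => ?_
    have hwz : 0 < w z := hw0 z (Finset.mem_erase.mp hz).2
    exact le_mul_of_one_le_left hwz.le (by exact_mod_cast hm1 z hz)
  have hrℝ : (2:ℝ) ≤ (F.card : ℝ) := by exact_mod_cast hr2
  have hkey : (F.card : ℝ) * w x + (1 - w x) = (F.card : ℝ) * ℓ := by
    have hne : (F.card : ℝ) - 1 ≠ 0 := by linarith
    rw [eq_div_iff hne] at heq
    nlinarith [heq]
  have hup : ∑ i ∈ F, ∑ z ∈ blk i, w z ≤ (F.card : ℝ) * ℓ := by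
    calc ∑ i ∈ F, ∑ z ∈ blk i, w z ≤ ∑ _i ∈ F, ℓ := Finset.sum_le_sum fun i _ => hub i
    _ = (F.card : ℝ) * ℓ := by rw [Finset.sum_const, nsmul_eq_mul]
  have hAeq : ∑ i ∈ F, ∑ z ∈ blk i, w z = (F.card : ℝ) * ℓ := by
    have : (F.card : ℝ) * ℓ ≤ ∑ i ∈ F, ∑ z ∈ blk i, w z := by
      rw [hA]; linarith [hlow, hsumerase]
    linarith
  have hBeq : ∑ z ∈ X.erase x, ((F.filter (fun i => z ∈ blk i)).card : ℝ) * w z = 1 - w x := by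
    rw [hAeq] at hA
    linarith
  constructor
  · intro i hxi
    have hiF : i ∈ F := by simp [hF, hxi]
    have hsum : ∑ i ∈ F, ∑ z ∈ blk i, w z = ∑ _i ∈ F, ℓ := by
      rw [hAeq, Finset.sum_const, nsmul_eq_mul]
    have := (Finset.sum_eq_sum_iff_of_le (fun i _ => hub i)).mp hsum
    exact this i hiF
  · intro y hyX hyx
    have hy' : y ∈ X.erase x := Finset.mem_erase.mpr ⟨hyx, hyX⟩
    have hsum : ∑ z ∈ X.erase x, w z
        = ∑ z ∈ X.erase x, ((F.filter (fun i => z ∈ blk i)).card : ℝ) * w z := by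
      rw [hBeq, hsumerase]
    have hle : ∀ z ∈ X.erase x, w z ≤ ((F.filter (fun i => z ∈ blk i)).card : ℝ) * w z := by
      intro z hz
      have hwz : 0 < w z := hw0 z (Finset.mem_erase.mp hz).2
      exact le_mul_of_one_le_left hwz.le (by exact_mod_cast hm1 z hz)
    have heach := (Finset.sum_eq_sum_iff_of_le hle).mp hsum y hy'
    have hwy : 0 < w y := hw0 y hyX
    have hcard1 : ((F.filter (fun i => y ∈ blk i)).card : ℝ) = 1 := by
      have h1 : (1 : ℝ) * w y = ((F.filter (fun i => y ∈ blk i)).card : ℝ) * w y := by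
        rw [one_mul]; exact heach
      exact (mul_right_cancel₀ hwy.ne' h1).symm
    have : (F.filter (fun i => y ∈ blk i)).card = 1 := by exact_mod_cast hcard1
    rw [← this, hF, Finset.filter_filter]
end

section
/- Let D = (X, B) be a covering design and let h be a weighting of the blocks B with nonnegative real values such that for every point x in X, the sum of h(B) over blocks B containing x is at least 1. Then for every normalised weighting w of X, L(D, w) >= 1 / (sum over B in B of h(B)). -/
open Finset

/-- Fractional transversal bound: if `h` is a nonnegative weighting of the blocks of a
covering design `D = (X, B)` such that the total `h`-weight of the blocks through each
point is at least `1`, then for every normalised weighting `w` of `X`,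
`L(D, w) ≥ 1 / (∑_B h(B))`. -/
theorem stmt5 {α : Type*} [DecidableEq α] {ι : Type*} [Fintype ι]
    (X : Finset α) (blk : ι → Finset α)
    (hsub : ∀ i, blk i ⊆ X)
    (hcov : ∀ x ∈ X, ∀ y ∈ X, x ≠ y → ∃ i, x ∈ blk i ∧ y ∈ blk i)
    (h : ι → ℝ) (hh0 : ∀ i, 0 ≤ h i)
    (hh1 : ∀ x ∈ X, 1 ≤ ∑ i ∈ univ.filter (fun i => x ∈ blk i), h i)
    (w : α → ℝ) (hw0 : ∀ x ∈ X, 0 ≤ w x) (hw1 : ∑ x ∈ X, w x = 1)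
    (ℓ : ℝ) (hℓ : IsGreatest {r : ℝ | ∃ i, r = ∑ x ∈ blk i, w x} ℓ) :
    ℓ ≥ 1 / ∑ i, h i := by
  -- X is nonempty since the weights sum to 1
  obtain ⟨x0, hx0⟩ : X.Nonempty := by
    by_contra hne
    rw [Finset.not_nonempty_iff_eq_empty] at hne
    simp [hne] at hw1
  have hS : (1 : ℝ) ≤ ∑ i, h i := by
    calc (1 : ℝ) ≤ ∑ i ∈ univ.filter (fun i => x0 ∈ blk i), h i := hh1 x0 hx0
    _ ≤ ∑ i, h i :=
      Finset.sum_le_sum_of_subset_of_nonneg (Finset.filter_subset _ _)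
        (fun i _ _ => hh0 i)
  have hSpos : (0 : ℝ) < ∑ i, h i := lt_of_lt_of_le one_pos hS
  -- each block sum is ≤ ℓ
  have hub : ∀ i, ∑ x ∈ blk i, w x ≤ ℓ := fun i => hℓ.2 ⟨i, rfl⟩
  -- key inequality: 1 ≤ ℓ * ∑ h
  have key : (1 : ℝ) ≤ ℓ * ∑ i, h i := by
    have step1 : (1 : ℝ) ≤ ∑ x ∈ X, w x * ∑ i ∈ univ.filter (fun i => x ∈ blk i), h i := by
      rw [← hw1]
      refine Finset.sum_le_sum fun x hx => ?_
      nth_rewrite 1 [← mul_one (w x)]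
      exact mul_le_mul_of_nonneg_left (hh1 x hx) (hw0 x hx)
    have swap : ∑ x ∈ X, w x * ∑ i ∈ univ.filter (fun i => x ∈ blk i), h i
        = ∑ i, h i * ∑ x ∈ blk i, w x := by
      have : ∀ x ∈ X, w x * ∑ i ∈ univ.filter (fun i => x ∈ blk i), h i
          = ∑ i, if x ∈ blk i then w x * h i else 0 := by
        intro x _
        rw [Finset.mul_sum, Finset.sum_filter]
      rw [Finset.sum_congr rfl this, Finset.sum_comm]
      refine Finset.sum_congr rfl fun i _ => ?_
      rw [← Finset.sum_filter]
      have hfe : X.filter (fun x => x ∈ blk i) = blk i := by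
        ext x
        simp only [Finset.mem_filter, and_iff_right_iff_imp]
        exact fun hx => hsub i hx
      rw [hfe, Finset.mul_sum]
      exact Finset.sum_congr rfl fun x _ => mul_comm _ _
    calc (1 : ℝ) ≤ ∑ x ∈ X, w x * ∑ i ∈ univ.filter (fun i => x ∈ blk i), h i := step1
      _ = ∑ i, h i * ∑ x ∈ blk i, w x := swap
      _ ≤ ∑ i, h i * ℓ :=
        Finset.sum_le_sum fun i _ => mul_le_mul_of_nonneg_left (hub i) (hh0 i)
      _ = ℓ * ∑ i, h i := by rw [← Finset.sum_mul, mul_comm]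
  rw [ge_iff_le, div_le_iff₀ hSpos]
  exact key
end

section
/- Let D = (X, B) be a covering design such that L(D) < 1, and let sigma = sum over x in X of 1/(r_x - 1). Then L(D) >= (1 + sigma) / (|X| + sigma). -/
open Finset

/-- If `D = (X, B)` is a covering design whose data limit `L(D)` (the least value of
the greatest block weight over normalised weightings) satisfies `L(D) < 1`, and
`σ = ∑_{x ∈ X} 1/(r_x - 1)`, then `L(D) ≥ (1 + σ) / (|X| + σ)`. -/
theorem stmt9 {α : Type*} [DecidableEq α] {ι : Type*} [Fintype ι]
    (X : Finset α) (blk : ι → Finset α)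
    (hsub : ∀ i, blk i ⊆ X)
    (hcov : ∀ x ∈ X, ∀ y ∈ X, x ≠ y → ∃ i, x ∈ blk i ∧ y ∈ blk i)
    (L : ℝ)
    (hL : IsLeast {ℓ : ℝ | ∃ w : α → ℝ, (∀ x ∈ X, 0 ≤ w x) ∧ (∑ x ∈ X, w x = 1) ∧
      IsGreatest {r : ℝ | ∃ i, r = ∑ x ∈ blk i, w x} ℓ} L)
    (hL1 : L < 1) :
    L ≥ (1 + ∑ x ∈ X, 1 / (((univ.filter fun i => x ∈ blk i).card : ℝ) - 1)) /
      ((X.card : ℝ) + ∑ x ∈ X, 1 / (((univ.filter fun i => x ∈ blk i).card : ℝ) - 1)) := by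
  obtain ⟨⟨w, hw0, hw1, hwG⟩, -⟩ := hL
  obtain ⟨i0, hi0⟩ := hwG.1
  have hL0 : 0 ≤ L := by
    rw [hi0]; exact Finset.sum_nonneg fun x hx => hw0 x (hsub i0 hx)
  have hub : ∀ i, ∑ x ∈ blk i, w x ≤ L := fun i => hwG.2 ⟨i, rfl⟩
  rcases Nat.lt_or_ge X.card 2 with hcard | hcard
  · -- degenerate cases
    interval_cases h : X.card
    · rw [Finset.card_eq_zero] at h
      rw [h, Finset.sum_empty] at hw1
      norm_num at hw1
    · obtain ⟨a, ha⟩ := Finset.card_eq_one.mp h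
      subst ha
      rw [Finset.sum_singleton] at hw1
      by_cases hex : ∃ i, a ∈ blk i
      · obtain ⟨i, hi⟩ := hex
        have hblk : blk i = {a} := Finset.Subset.antisymm (hsub i)
          (Finset.singleton_subset_iff.mpr hi)
        have := hub i
        rw [hblk, Finset.sum_singleton, hw1] at this
        linarith
      · push_neg at hex
        have hf : (univ.filter fun i => a ∈ blk i) = ∅ := by
          simp [Finset.filter_eq_empty_iff, hex]
        rw [Finset.sum_singleton, hf]
        norm_num
        exact hL0
  · -- main case
    have key : ∀ x ∈ X, 2 ≤ (univ.filter fun i => x ∈ blk i).card ∧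
        w x ≤ L - (1 - L) / (((univ.filter fun i => x ∈ blk i).card : ℝ) - 1) := by
      intro x hx
      set A := univ.filter fun i => x ∈ blk i with hA
      -- double counting
      have h1 : ∑ i ∈ A, ∑ y ∈ blk i, w y
          = ∑ y ∈ X, ((A.filter fun i => y ∈ blk i).card : ℝ) * w y := by
        have : ∀ i ∈ A, ∑ y ∈ blk i, w y = ∑ y ∈ X, if y ∈ blk i then w y else 0 := by
          intro i _
          rw [Finset.sum_ite_mem, Finset.inter_eq_right.mpr (hsub i)]
        rw [Finset.sum_congr rfl this, Finset.sum_comm]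
        refine Finset.sum_congr rfl fun y _ => ?_
        rw [Finset.sum_ite, Finset.sum_const_zero, add_zero, Finset.sum_const,
          nsmul_eq_mul]
      have hcx : (A.filter fun i => x ∈ blk i) = A := by
        refine Finset.filter_eq_self.mpr fun i hi => ?_
        simpa [hA] using hi
      have hcy : ∀ y ∈ X.erase x, w y ≤ ((A.filter fun i => y ∈ blk i).card : ℝ) * w y := by
        intro y hy
        have hyX := Finset.mem_of_mem_erase hy
        have hyx := Finset.ne_of_mem_erase hy
        obtain ⟨i, hxi, hyi⟩ := hcov x hx y hyX (Ne.symm hyx)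
        have hne : (A.filter fun i => y ∈ blk i).Nonempty :=
          ⟨i, by simp [hA, hxi, hyi]⟩
        have h1le : (1 : ℝ) ≤ ((A.filter fun i => y ∈ blk i).card : ℝ) := by
          exact_mod_cast Finset.card_pos.mpr hne
        nlinarith [hw0 y hyX]
      have herase : w x + ∑ y ∈ X.erase x, w y = 1 := by
        rw [Finset.add_sum_erase X w hx, hw1]
      have hdc : (1 : ℝ) + ((A.card : ℝ) - 1) * w x ≤ ∑ i ∈ A, ∑ y ∈ blk i, w y := by
        rw [h1, ← Finset.add_sum_erase X _ hx, hcx]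
        have h2 : ∑ y ∈ X.erase x, w y ≤
            ∑ y ∈ X.erase x, ((A.filter fun i => y ∈ blk i).card : ℝ) * w y :=
          Finset.sum_le_sum hcy
        nlinarith
      have hup : ∑ i ∈ A, ∑ y ∈ blk i, w y ≤ (A.card : ℝ) * L := by
        calc ∑ i ∈ A, ∑ y ∈ blk i, w y ≤ ∑ _i ∈ A, L := Finset.sum_le_sum fun i _ => hub i
        _ = (A.card : ℝ) * L := by rw [Finset.sum_const, nsmul_eq_mul]
      have hmain : (1 : ℝ) + ((A.card : ℝ) - 1) * w x ≤ (A.card : ℝ) * L :=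
        le_trans hdc hup
      have hApos : 1 ≤ A.card := by
        obtain ⟨y, hyX, hyx⟩ := Finset.exists_mem_ne hcard x
        obtain ⟨i, hxi, hyi⟩ := hcov x hx y hyX (Ne.symm hyx)
        exact Finset.card_pos.mpr ⟨i, by simp [hA, hxi]⟩
      have hA2 : 2 ≤ A.card := by
        have hne1 : A.card ≠ 1 := by
          intro h1
          rw [h1] at hmain
          push_cast at hmain
          linarith
        omega
      refine ⟨hA2, ?_⟩
      have hr1 : (0 : ℝ) < (A.card : ℝ) - 1 := by
        have : (2 : ℝ) ≤ (A.card : ℝ) := by exact_mod_cast hA2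
        linarith
      have hwx : w x ≤ ((A.card : ℝ) * L - 1) / ((A.card : ℝ) - 1) :=
        (le_div_iff₀ hr1).mpr (by nlinarith)
      have heq : ((A.card : ℝ) * L - 1) / ((A.card : ℝ) - 1)
          = L - (1 - L) / ((A.card : ℝ) - 1) := by
        field_simp
        ring
      linarith [heq ▸ hwx]
    set σ := ∑ x ∈ X, 1 / (((univ.filter fun i => x ∈ blk i).card : ℝ) - 1) with hσ
    have hσ0 : 0 ≤ σ := by
      refine Finset.sum_nonneg fun x hx => ?_
      have h2 : (2 : ℝ) ≤ ((univ.filter fun i => x ∈ blk i).card : ℝ) := by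
        exact_mod_cast (key x hx).1
      have : (0:ℝ) < ((univ.filter fun i => x ∈ blk i).card : ℝ) - 1 := by linarith
      positivity
    have hsum : (1 : ℝ) ≤ (X.card : ℝ) * L - (1 - L) * σ := by
      have hle : ∑ x ∈ X, w x
          ≤ ∑ x ∈ X, (L - (1 - L) / (((univ.filter fun i => x ∈ blk i).card : ℝ) - 1)) :=
        Finset.sum_le_sum fun x hx => (key x hx).2
      have heq : ∑ x ∈ X, (L - (1 - L) / (((univ.filter fun i => x ∈ blk i).card : ℝ) - 1))
          = (X.card : ℝ) * L - (1 - L) * σ := by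
        rw [Finset.sum_sub_distrib, Finset.sum_const, nsmul_eq_mul, hσ, Finset.mul_sum]
        congr 1
        refine Finset.sum_congr rfl fun x hx => ?_
        rw [mul_one_div]
      linarith [hw1]
    have hpos : (0 : ℝ) < (X.card : ℝ) + σ := by
      have : (2 : ℝ) ≤ (X.card : ℝ) := by exact_mod_cast hcard
      linarith
    rw [ge_iff_le, div_le_iff₀ hpos]
    nlinarith
end

section
/- If D is a (k,n)-transversal design with k <= n, then L(D) = 1/k. -/
open Finset

/-- If `D` is a `(k, n)`-transversal design with `k ≤ n`, then `L(D) = 1/k`.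
A `(k,n)`-transversal design is a linear space on `k*n` points whose blocks are `k`
groups of size `n` partitioning the point set together with `n^2` further blocks of
size `k`. `L(D)` is formalised as the least, over normalised weightings `w`, of the
greatest block weight. -/
theorem stmt10 {α : Type*} [DecidableEq α] (k n : ℕ) (hk : 0 < k) (hkn : k ≤ n)
    (X : Finset α) (hXcard : X.card = k * n)
    (g : Fin k → Finset α) (t : Fin (n ^ 2) → Finset α)
    (hgsub : ∀ i, g i ⊆ X) (htsub : ∀ j, t j ⊆ X)
    (hgcard : ∀ i, (g i).card = n) (htcard : ∀ j, (t j).card = k)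
    (hgdisj : ∀ i i', i ≠ i' → Disjoint (g i) (g i'))
    (hgcover : ∀ x ∈ X, ∃ i, x ∈ g i)
    (hlinear : ∀ x ∈ X, ∀ y ∈ X, x ≠ y →
      ∃! b : Fin k ⊕ Fin (n ^ 2), x ∈ Sum.elim g t b ∧ y ∈ Sum.elim g t b) :
    IsLeast {ℓ : ℝ | ∃ w : α → ℝ, (∀ x ∈ X, 0 ≤ w x) ∧ (∑ x ∈ X, w x = 1) ∧
        IsGreatest {r : ℝ | ∃ b : Fin k ⊕ Fin (n ^ 2),
          r = ∑ x ∈ Sum.elim g t b, w x} ℓ}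
      (1 / (k : ℝ)) := by

  have hn : 0 < n := hk.trans_le hkn
  have hkR : (0:ℝ) < k := by exact_mod_cast hk
  have hnR : (0:ℝ) < n := by exact_mod_cast hn
  have hXeq : X = Finset.univ.biUnion g := by
    apply Finset.Subset.antisymm
    · intro x hx
      obtain ⟨i, hi⟩ := hgcover x hx
      exact Finset.mem_biUnion.2 ⟨i, Finset.mem_univ i, hi⟩
    · intro x hx
      obtain ⟨i, _, hi⟩ := Finset.mem_biUnion.1 hx
      exact hgsub i hi
  constructor
  · refine ⟨fun _ => 1 / (k * n : ℝ), fun x _ => by positivity, ?_, ?_, ?_⟩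
    · rw [Finset.sum_const, hXcard, nsmul_eq_mul]
      push_cast
      field_simp
    · refine ⟨Sum.inl ⟨0, hk⟩, ?_⟩
      rw [Sum.elim_inl, Finset.sum_const, hgcard, nsmul_eq_mul]
      field_simp
    · rintro r ⟨b, rfl⟩
      cases b with
      | inl i =>
        rw [Sum.elim_inl, Finset.sum_const, hgcard, nsmul_eq_mul]
        have : (n:ℝ) * (1 / (k * n)) = 1 / k := by field_simp
        exact this.le
      | inr j =>
        rw [Sum.elim_inr, Finset.sum_const, htcard, nsmul_eq_mul]
        have h1 : (k:ℝ) * (1 / (k * n)) = 1 / n := by field_simp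
        have hknR : (k:ℝ) ≤ n := by exact_mod_cast hkn
        rw [h1]
        exact one_div_le_one_div_of_le hkR hknR
  · rintro ℓ ⟨w, hw0, hw1, hmem, hub⟩
    have hdisj : ∀ i ∈ (Finset.univ : Finset (Fin k)), ∀ i' ∈ Finset.univ,
        i ≠ i' → Disjoint (g i) (g i') := fun i _ i' _ h => hgdisj i i' h
    have hsum : ∑ i : Fin k, ∑ x ∈ g i, w x = 1 := by
      rw [← Finset.sum_biUnion hdisj, ← hXeq, hw1]
    have hle : ∀ i : Fin k, ∑ x ∈ g i, w x ≤ ℓ := fun i => hub ⟨Sum.inl i, rfl⟩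
    have h1 : (1:ℝ) ≤ k * ℓ := by
      calc (1:ℝ) = ∑ i : Fin k, ∑ x ∈ g i, w x := hsum.symm
        _ ≤ ∑ _i : Fin k, ℓ := Finset.sum_le_sum fun i _ => hle i
        _ = k * ℓ := by rw [Finset.sum_const, Finset.card_univ, Fintype.card_fin, nsmul_eq_mul]
    rw [div_le_iff₀ hkR]
    linarith
end

section
/- If D is a (t,q)-projective Hjelmslev plane, then L(D) = (q+1) / (t*(q^2+q+1)). -/
open Finset

/-- If `D` is a `(t, q)`-projective Hjelmslev plane — a covering design with
`t^2*(q^2+q+1)` points and `t^2*(q^2+q+1)` blocks in which every block has size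
`t*(q+1)` and every point lies in exactly `t*(q+1)` blocks — then
`L(D) = (q+1) / (t*(q^2+q+1))`. -/
theorem stmt11 {α : Type*} [DecidableEq α] {ι : Type*} [Fintype ι]
    (t q : ℕ) (ht : 0 < t) (hq : 0 < q)
    (X : Finset α) (blk : ι → Finset α)
    (hsub : ∀ i, blk i ⊆ X)
    (hcov : ∀ x ∈ X, ∀ y ∈ X, x ≠ y → ∃ i, x ∈ blk i ∧ y ∈ blk i)
    (hv : X.card = t ^ 2 * (q ^ 2 + q + 1))
    (hb : Fintype.card ι = t ^ 2 * (q ^ 2 + q + 1))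
    (hkk : ∀ i, (blk i).card = t * (q + 1))
    (hr : ∀ x ∈ X, (univ.filter fun i => x ∈ blk i).card = t * (q + 1)) :
    IsLeast {ℓ : ℝ | ∃ w : α → ℝ, (∀ x ∈ X, 0 ≤ w x) ∧ (∑ x ∈ X, w x = 1) ∧
        IsGreatest {r : ℝ | ∃ i, r = ∑ x ∈ blk i, w x} ℓ}
      (((q : ℝ) + 1) / ((t : ℝ) * ((q : ℝ) ^ 2 + q + 1))) := by
  have ht' : (0:ℝ) < t := by exact_mod_cast ht
  have hq' : (0:ℝ) < q := by exact_mod_cast hq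
  have hden : (0:ℝ) < (t : ℝ) * ((q : ℝ) ^ 2 + q + 1) := by positivity
  have hN : (0:ℝ) < (t:ℝ)^2 * ((q:ℝ)^2 + q + 1) := by positivity
  have hXcard : (X.card : ℝ) = (t:ℝ)^2 * ((q:ℝ)^2 + q + 1) := by
    rw [hv]; push_cast; ring
  have hιne : Nonempty ι := by
    rw [← Fintype.card_pos_iff, hb]; positivity
  have hval : ((q : ℝ) + 1) / ((t : ℝ) * ((q : ℝ) ^ 2 + q + 1))
      = ((t:ℝ) * (q + 1)) / ((t:ℝ)^2 * ((q:ℝ)^2 + q + 1)) := by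
    field_simp
  constructor
  · -- membership: uniform weighting
    refine ⟨fun _ => 1 / (X.card : ℝ), fun x _ => by positivity, ?_, ?_⟩
    · rw [Finset.sum_const, nsmul_eq_mul]
      have hXne : (X.card:ℝ) ≠ 0 := by rw [hXcard]; positivity
      field_simp
    · have hblock : ∀ i : ι, ∑ x ∈ blk i, (1 / (X.card : ℝ))
          = ((q : ℝ) + 1) / ((t : ℝ) * ((q : ℝ) ^ 2 + q + 1)) := by
        intro i
        rw [Finset.sum_const, nsmul_eq_mul, hkk i, hval, hXcard]
        push_cast
        field_simp
      constructor
      · exact ⟨Classical.arbitrary ι, (hblock _).symm⟩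
      · rintro r ⟨i, rfl⟩
        rw [hblock i]
  · -- lower bound
    rintro ℓ ⟨w, hw0, hw1, ⟨⟨i0, hi0⟩, hub⟩⟩
    have key : ∑ i : ι, ∑ x ∈ blk i, w x = (t:ℝ) * (q + 1) := by
      have h1 : ∀ i : ι, ∑ x ∈ blk i, w x = ∑ x ∈ X, if x ∈ blk i then w x else 0 := by
        intro i
        rw [Finset.sum_ite_mem, Finset.inter_eq_right.mpr (hsub i)]
      calc ∑ i : ι, ∑ x ∈ blk i, w x
          = ∑ i : ι, ∑ x ∈ X, if x ∈ blk i then w x else 0 := by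
            exact Finset.sum_congr rfl fun i _ => h1 i
        _ = ∑ x ∈ X, ∑ i : ι, if x ∈ blk i then w x else 0 := Finset.sum_comm
        _ = ∑ x ∈ X, ((t:ℝ) * (q + 1)) * w x := by
            refine Finset.sum_congr rfl fun x hx => ?_
            rw [← Finset.sum_filter, Finset.sum_const, hr x hx, nsmul_eq_mul]
            push_cast; ring
        _ = (t:ℝ) * (q + 1) := by rw [← Finset.mul_sum, hw1, mul_one]
    have hbound : (t:ℝ) * (q + 1) ≤ ((t:ℝ)^2 * ((q:ℝ)^2 + q + 1)) * ℓ := by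
      have h2 : ∑ i : ι, ∑ x ∈ blk i, w x ≤ ∑ i : ι, ℓ :=
        Finset.sum_le_sum fun i _ => hub ⟨i, rfl⟩
      rw [key, Finset.sum_const, nsmul_eq_mul, Finset.card_univ, hb] at h2
      calc (t:ℝ) * (q + 1) ≤ ((t^2*(q^2+q+1) : ℕ) : ℝ) * ℓ := h2
        _ = ((t:ℝ)^2 * ((q:ℝ)^2 + q + 1)) * ℓ := by push_cast; ring
    rw [hval, div_le_iff₀ hN]
    nlinarith [hbound]
end

section
/- Let s >= 2 be an integer and let D = (X, B) be a covering design admitting a normalised weighting w with L(D, w) <= 1/s. Then the number of blocks |B| is at least s^2 + s. -/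
open Finset

/-- Let `s ≥ 2` be an integer and `D = (X, B)` a covering design (with at least two
points) admitting a normalised weighting `w` with `L(D, w) ≤ 1/s`. Then the number of
blocks is at least `s^2 + s`. -/
theorem stmt16 {α : Type*} [DecidableEq α] {ι : Type*} [Fintype ι]
    (s : ℕ) (hs : 2 ≤ s)
    (X : Finset α) (hX : 2 ≤ X.card) (blk : ι → Finset α)
    (hsub : ∀ i, blk i ⊆ X)
    (hcov : ∀ x ∈ X, ∀ y ∈ X, x ≠ y → ∃ i, x ∈ blk i ∧ y ∈ blk i)
    (w : α → ℝ) (hw0 : ∀ x ∈ X, 0 ≤ w x) (hw1 : ∑ x ∈ X, w x = 1)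
    (ℓ : ℝ) (hℓ : IsGreatest {r : ℝ | ∃ i, r = ∑ x ∈ blk i, w x} ℓ)
    (hℓs : ℓ ≤ 1 / (s : ℝ)) :
    s ^ 2 + s ≤ Fintype.card ι := by
  classical
  have hs0 : (0 : ℝ) < s := by positivity
  have hub : ∀ i, ∑ x ∈ blk i, w x ≤ ℓ := fun i => hℓ.2 ⟨i, rfl⟩
  -- double counting identity
  have swap : ∀ T : Finset ι, ∑ i ∈ T, ∑ y ∈ blk i, w y
      = ∑ y ∈ X, w y * ((T.filter (fun i => y ∈ blk i)).card : ℝ) := by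
    intro T
    have h1 : ∀ i, ∑ y ∈ blk i, w y = ∑ y ∈ X, if y ∈ blk i then w y else 0 := by
      intro i
      rw [Finset.sum_ite_mem, Finset.inter_eq_right.mpr (hsub i)]
    calc ∑ i ∈ T, ∑ y ∈ blk i, w y
        = ∑ i ∈ T, ∑ y ∈ X, if y ∈ blk i then w y else 0 :=
          Finset.sum_congr rfl fun i _ => h1 i
      _ = ∑ y ∈ X, ∑ i ∈ T, if y ∈ blk i then w y else 0 := Finset.sum_comm
      _ = ∑ y ∈ X, w y * ((T.filter (fun i => y ∈ blk i)).card : ℝ) := by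
          refine Finset.sum_congr rfl fun y _ => ?_
          rw [← Finset.sum_filter, Finset.sum_const, nsmul_eq_mul, mul_comm]
  -- every positively weighted point is in at least s+1 blocks
  have key : ∀ x ∈ X, 0 < w x →
      (s + 1 : ℝ) ≤ ((Finset.univ.filter (fun i : ι => x ∈ blk i)).card : ℝ) := by
    intro x hx hwx
    set T := Finset.univ.filter (fun i : ι => x ∈ blk i) with hT
    by_contra hlt
    push_neg at hlt
    have hrs : (T.card : ℝ) ≤ s := by
      have : (T.card : ℝ) < s + 1 := hlt
      have h2 : T.card < s + 1 := by exact_mod_cast this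
      exact_mod_cast Nat.lt_succ_iff.mp h2
    -- T is nonempty
    obtain ⟨y, hy, hyx⟩ := Finset.exists_mem_ne (Nat.lt_of_lt_of_le Nat.one_lt_two hX) x
    obtain ⟨i₀, hxi₀, hyi₀⟩ := hcov x hx y hy (Ne.symm hyx)
    have hTne : 1 ≤ T.card := Finset.card_pos.mpr ⟨i₀, by
      simp [hT, hxi₀]⟩
    -- each point of X is in at least one block of T, and x in all of them
    have hcx : (T.filter (fun i => x ∈ blk i)) = T := by
      apply Finset.filter_true_of_mem
      intro i hi
      simpa [hT] using hi
    have hlow : 1 - w x + (T.card : ℝ) * w x ≤ ∑ i ∈ T, ∑ y ∈ blk i, w y := by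
      rw [swap T]
      rw [← Finset.add_sum_erase X _ hx, hcx]
      have h1 : ∑ y ∈ X.erase x, w y ≤
          ∑ y ∈ X.erase x, w y * ((T.filter (fun i => y ∈ blk i)).card : ℝ) := by
        refine Finset.sum_le_sum fun z hz => ?_
        have hzX : z ∈ X := Finset.mem_of_mem_erase hz
        have hzx : z ≠ x := Finset.ne_of_mem_erase hz
        obtain ⟨j, hzj, hxj⟩ := hcov z hzX x hx hzx
        have hjT : j ∈ T.filter (fun i => z ∈ blk i) := by
          simp [hT, hxj, hzj]
        have hc1 : (1 : ℝ) ≤ ((T.filter (fun i => z ∈ blk i)).card : ℝ) := by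
          exact_mod_cast Finset.card_pos.mpr ⟨j, hjT⟩
        nlinarith [hw0 z hzX]
      have h2 : ∑ y ∈ X.erase x, w y = 1 - w x := by
        have := Finset.add_sum_erase X w hx
        linarith
      linarith [h1, h2.symm ▸ h1]
    have hhigh : ∑ i ∈ T, ∑ y ∈ blk i, w y ≤ (T.card : ℝ) * ℓ := by
      calc ∑ i ∈ T, ∑ y ∈ blk i, w y ≤ ∑ i ∈ T, ℓ := Finset.sum_le_sum fun i _ => hub i
        _ = (T.card : ℝ) * ℓ := by rw [Finset.sum_const, nsmul_eq_mul]
    -- contradiction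
    have hrl : (T.card : ℝ) * ℓ ≤ 1 := by
      calc (T.card : ℝ) * ℓ ≤ (T.card : ℝ) * (1 / s) := by
            exact mul_le_mul_of_nonneg_left hℓs (by positivity)
        _ ≤ (s : ℝ) * (1 / s) := by
            exact mul_le_mul_of_nonneg_right hrs (by positivity)
        _ = 1 := by field_simp
    have hr1 : (T.card : ℝ) ≤ 1 := by nlinarith
    have hr1' : T.card = 1 := le_antisymm (by exact_mod_cast hr1) hTne
    -- then ℓ ≥ 1, contradicting ℓ ≤ 1/s ≤ 1/2
    rw [hr1'] at hlow hhigh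
    simp at hlow hhigh
    have : (1 : ℝ) ≤ ℓ := by linarith
    have : ℓ ≤ 1 / 2 := by
      calc ℓ ≤ 1 / (s : ℝ) := hℓs
        _ ≤ 1 / 2 := by
          apply one_div_le_one_div_of_le (by norm_num)
          exact_mod_cast hs
    linarith
  -- total count
  have htot : (s + 1 : ℝ) ≤ ∑ i : ι, ∑ y ∈ blk i, w y := by
    rw [swap Finset.univ]
    calc (s + 1 : ℝ) = ∑ y ∈ X, w y * (s + 1) := by
          rw [← Finset.sum_mul, hw1, one_mul]
      _ ≤ ∑ y ∈ X, w y * ((Finset.univ.filter (fun i : ι => y ∈ blk i)).card : ℝ) := by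
          refine Finset.sum_le_sum fun y hy => ?_
          rcases eq_or_lt_of_le (hw0 y hy) with h0 | h0
          · rw [← h0]; simp
          · exact mul_le_mul_of_nonneg_left (key y hy h0) h0.le
  have hfin : (s + 1 : ℝ) ≤ (Fintype.card ι : ℝ) * ℓ := by
    calc (s + 1 : ℝ) ≤ ∑ i : ι, ∑ y ∈ blk i, w y := htot
      _ ≤ ∑ i : ι, ℓ := Finset.sum_le_sum fun i _ => hub i
      _ = (Fintype.card ι : ℝ) * ℓ := by
          rw [Finset.sum_const, nsmul_eq_mul, Finset.card_univ]
  have hcard : ((s : ℝ)^2 + s) ≤ (Fintype.card ι : ℝ) := by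
    have hb0 : (0 : ℝ) ≤ (Fintype.card ι : ℝ) := by positivity
    have : (Fintype.card ι : ℝ) * ℓ ≤ (Fintype.card ι : ℝ) * (1 / s) :=
      mul_le_mul_of_nonneg_left hℓs hb0
    have h3 : (s + 1 : ℝ) * s ≤ (Fintype.card ι : ℝ) * (1 / s) * s := by nlinarith
    rw [mul_assoc, one_div_mul_cancel (ne_of_gt hs0), mul_one] at h3
    nlinarith
  exact_mod_cast hcard
end

section
/- Let D = (X, B) be the covering design with X = Z_12 (integers mod 12) and B = { {i, i+1, i+4, i+6} : i in Z_12 }. Then D is a covering design (every pair of distinct residues mod 12 occurs together in some block), every block has size 4, and every point lies in exactly 4 blocks; consequently the uniform normalised weighting w(x) = 1/12 satisfies L(D, w) = 1/3. -/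
open Finset

/-- For `X = ℤ/12` and blocks `{i, i+1, i+4, i+6}` for `i ∈ ℤ/12`: every pair of
distinct points lies in a common block, every block has size `4`, every point lies in
exactly `4` blocks, and the uniform normalised weighting `w = 1/12` satisfies
`L(D, w) = 1/3`. -/
theorem stmt17 :
    let blk : ZMod 12 → Finset (ZMod 12) := fun i => {i, i + 1, i + 4, i + 6}
    let w : ZMod 12 → ℝ := fun _ => 1 / 12
    (∀ x y : ZMod 12, x ≠ y → ∃ i, x ∈ blk i ∧ y ∈ blk i) ∧
    (∀ i, (blk i).card = 4) ∧
    (∀ x : ZMod 12, (univ.filter fun i => x ∈ blk i).card = 4) ∧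
    (∑ x : ZMod 12, w x = 1) ∧
    IsGreatest {r : ℝ | ∃ i, r = ∑ x ∈ blk i, w x} (1 / 3) := by
  intro blk w
  have hcard : ∀ i, (blk i).card = 4 := by decide
  have hsum : ∀ i, ∑ x ∈ blk i, w x = 1 / 3 := by
    intro i
    rw [Finset.sum_const, hcard]
    norm_num
  refine ⟨by decide, hcard, by decide, ?_, ⟨0, (hsum 0).symm⟩, ?_⟩
  · rw [Finset.sum_const]
    simp
  · rintro r ⟨i, rfl⟩
    rw [hsum]
end

section
/- Let D = (X, B) be the covering design with X = {1,2,3,4,5} and B = { {1,2}, {1,3}, {1,4,5}, {2,3,4}, {2,3,5} }. Then the normalised weighting w with w(1) = 1/3, w(2) = w(3) = 2/9, w(4) = w(5) = 1/9 satisfies L(D, w) = 5/9, and moreover every normalised weighting w' of X satisfies L(D, w') >= 5/9 (so L(D) = 5/9). -/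
open Finset

/-- For the covering design on `X = {1,2,3,4,5}` with blocks
`{1,2}, {1,3}, {1,4,5}, {2,3,4}, {2,3,5}`: the normalised weighting `w` with
`w(1) = 1/3`, `w(2) = w(3) = 2/9`, `w(4) = w(5) = 1/9` satisfies `L(D, w) = 5/9`, and
every normalised weighting `w'` satisfies `L(D, w') ≥ 5/9`; hence `L(D) = 5/9`. -/
theorem stmt18 :
    let X : Finset ℕ := {1, 2, 3, 4, 5}
    let blks : Finset (Finset ℕ) := {{1, 2}, {1, 3}, {1, 4, 5}, {2, 3, 4}, {2, 3, 5}}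
    let w : ℕ → ℝ := fun x =>
      if x = 1 then 1 / 3 else if x = 2 ∨ x = 3 then 2 / 9 else 1 / 9
    (∀ b ∈ blks, b ⊆ X) ∧
    (∀ x ∈ X, ∀ y ∈ X, x ≠ y → ∃ b ∈ blks, x ∈ b ∧ y ∈ b) ∧
    (∀ x ∈ X, 0 ≤ w x) ∧ (∑ x ∈ X, w x = 1) ∧
    IsGreatest {r : ℝ | ∃ b ∈ blks, r = ∑ x ∈ b, w x} (5 / 9) ∧
    (∀ w' : ℕ → ℝ, (∀ x ∈ X, 0 ≤ w' x) → ∑ x ∈ X, w' x = 1 →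
      ∀ ℓ : ℝ, IsGreatest {r : ℝ | ∃ b ∈ blks, r = ∑ x ∈ b, w' x} ℓ → 5 / 9 ≤ ℓ) := by
  intro X blks w
  refine ⟨?_, ?_, ?_, ?_, ?_, ?_⟩
  · decide
  · decide
  · intro x hx
    fin_cases hx <;> norm_num [w]
  · simp only [X, w]
    norm_num
  · constructor
    · refine ⟨{1, 4, 5}, by decide, ?_⟩
      norm_num [w]
    · rintro r ⟨b, hb, rfl⟩
      fin_cases hb <;> norm_num [w]
  · intro w' _ hsum ℓ hℓ
    have h1 : (∑ x ∈ ({1, 2} : Finset ℕ), w' x) ≤ ℓ := hℓ.2 ⟨{1,2}, by decide, rfl⟩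
    have h2 : (∑ x ∈ ({1, 3} : Finset ℕ), w' x) ≤ ℓ := hℓ.2 ⟨{1,3}, by decide, rfl⟩
    have h3 : (∑ x ∈ ({1, 4, 5} : Finset ℕ), w' x) ≤ ℓ := hℓ.2 ⟨{1,4,5}, by decide, rfl⟩
    have h4 : (∑ x ∈ ({2, 3, 4} : Finset ℕ), w' x) ≤ ℓ := hℓ.2 ⟨{2,3,4}, by decide, rfl⟩
    have h5 : (∑ x ∈ ({2, 3, 5} : Finset ℕ), w' x) ≤ ℓ := hℓ.2 ⟨{2,3,5}, by decide, rfl⟩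
    simp only [X, show ({1,2,3,4,5} : Finset ℕ) = {1,2,3,4,5} from rfl,
      Finset.sum_insert, Finset.mem_insert, Finset.sum_singleton] at hsum h1 h2 h3 h4 h5 <;>
      norm_num at hsum h1 h2 h3 h4 h5
    linarith
end
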